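/- Call a weak composition a quasiflat if its nonzero entries occupy a set of consecutive positions. If a weak composition a of length n is not quasiflat, then for every value of β the glide polynomial 𝒢_a^{(β)} is not quasisymmetric in x_1,...,x_n. -/

import Mathlib

open scoped Classical
open MvPolynomial Finset

namespace GlidePaper

/-! ## Weak compositions, kompositions, glides -/

/-- Extend a length-`n` weak composition to a function on `ℕ` (zero outside). -/
def extVal {n : ℕ} (v : Fin n → ℕ) (t : ℕ) : ℕ := if h : t < n then v ⟨t, h⟩ else 0

/-- Extend a coloring to a function on `ℕ` (black outside). -/
def extRed {n : ℕ} (r : Fin n → Bool) (t : ℕ) : Bool := if h : t < n then r ⟨t, h⟩ else false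

/-- The flattening of a weak composition: the list of its nonzero entries, in order. -/
def flattenW {n : ℕ} (a : Fin n → ℕ) : List ℕ := ((List.finRange n).map a).filter (· ≠ 0)

/-- The (0-indexed) positions of the nonzero entries of `a`, in increasing order. -/
def nzPos {n : ℕ} (a : Fin n → ℕ) : List ℕ :=
  ((List.finRange n).filter (fun i => a i ≠ 0)).map Fin.val

/-- The excess of a weak komposition, i.e. its number of red entries. -/
def redCount {n : ℕ} (r : Fin n → Bool) : ℕ :=
  (Finset.univ.filter (fun i => r i = true)).card

/-- The weak komposition with values `v` and red set `r` is a glide of the weak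
composition `a` (all of length `n`).  Blocks are delimited by
`0 = e 0 < e 1 < ⋯ < e ℓ ≤ n` where `ℓ` is the number of nonzero entries of `a`;
the `j`-th block consists of the (1-indexed) entries `e j + 1, …, e (j+1)`,
i.e. the 0-indexed positions `e j, …, e (j+1) - 1`, entries beyond position `e ℓ`
vanish, and:
(i) the sum of each block is the corresponding entry of `flat a` plus the number of
red entries of the block; (ii) the block ends weakly left of the position of the
corresponding nonzero entry of `a`; (iii) the first entry of each block is not red.
Red entries are required to be positive. -/
def IsGlide {n : ℕ} (a : Fin n → ℕ) (v : Fin n → ℕ) (r : Fin n → Bool) : Prop :=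
  (∀ i, r i = true → 0 < v i) ∧
  ∃ e : ℕ → ℕ, e 0 = 0 ∧ e (flattenW a).length ≤ n ∧
    (∀ t, e (flattenW a).length ≤ t → extVal v t = 0) ∧
    (∀ j, j < (flattenW a).length → e j < e (j + 1)) ∧
    (∀ j, j < (flattenW a).length →
      ((∑ t ∈ Finset.Ico (e j) (e (j + 1)), extVal v t)
          = (flattenW a).getD j 0
            + ((Finset.Ico (e j) (e (j + 1))).filter (fun t => extRed r t = true)).card)
      ∧ e (j + 1) ≤ (nzPos a).getD j 0 + 1
      ∧ extRed r (e j) = false)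

/-- The glide polynomial `𝒢_a^{(β)}` in variables `x_1, …, x_n`, with coefficient
ring `R` and parameter `β : R`: the sum of `β^{ex(b)} x^b` over all glides `b` of `a`.
(Every glide of `a` has all entries at most `(∑ i, a i) + n`, so the sum below
ranges over a sufficiently large finite set.) -/
noncomputable def glidePoly {n : ℕ} {R : Type*} [CommRing R] (β : R) (a : Fin n → ℕ) :
    MvPolynomial (Fin n) R :=
  ∑ p : (Fin n → Fin ((∑ i, a i) + n + 1)) × (Fin n → Bool),
    if IsGlide a (fun i => (p.1 i : ℕ)) p.2 then
      monomial (Finsupp.equivFunOnFinite.symm fun i => ((p.1 i : ℕ))) (β ^ redCount p.2)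
    else 0

/-! ## Pipe dreams -/

/-- The state of a pipe while being traced through a pipe dream: either inside the
tile in row `r`, column `c` (0-indexed from the top-left), having entered from the
west (`fromWest = true`) or from the south (`fromWest = false`), or already exited
through the top edge at column `c`. -/
inductive PipeState : Type
  | inside (r c : ℕ) (fromWest : Bool)
  | exited (c : ℕ)
deriving DecidableEq

/-- One step of tracing a pipe through the pipe dream with crossing set `D`:
at a crossing tile the pipe goes straight; at an elbow tile a pipe entering from the
west exits north and a pipe entering from the south exits east. -/
def pipeStep (D : Finset (ℕ × ℕ)) : PipeState → PipeState
  | .exited c => .exited c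
  | .inside r c fromW =>
    let cross : Bool := decide ((r, c) ∈ D)
    if fromW ≠ cross then
      -- exits through the north edge of the tile
      if r = 0 then .exited c else .inside (r - 1) c false
    else .inside r (c + 1) true

/-- The pipe labeled `p` (0-indexed) enters the quadrant at row `p` from the west. -/
def startState (p : ℕ) : PipeState := .inside p 0 true

/-- Pipe `p` passes through tile `(r, c)` entering from the west (`fromW = true`)
or from the south (`fromW = false`). -/
def Passes (D : Finset (ℕ × ℕ)) (p r c : ℕ) (fromW : Bool) : Prop :=
  ∃ k, (pipeStep D)^[k] (startState p) = .inside r c fromW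

/-- Pipe `p` exits the quadrant through the top edge at column `c` (0-indexed). -/
def ExitsAt (D : Finset (ℕ × ℕ)) (p c : ℕ) : Prop :=
  ∃ k, (pipeStep D)^[k] (startState p) = .exited c

/-- The tile `x` is a crossing of `D` whose west-entering pipe is `p` and whose
south-entering pipe is `q`. -/
def CrossPair (D : Finset (ℕ × ℕ)) (x : ℕ × ℕ) (p q : ℕ) : Prop :=
  x ∈ D ∧ Passes D p x.1 x.2 true ∧ Passes D q x.1 x.2 false

/-- The reduction of a pipe dream: keep, among the crossings between each pair of
pipes, only the southwestmost one. -/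
noncomputable def reduct (D : Finset (ℕ × ℕ)) : Finset (ℕ × ℕ) :=
  D.filter (fun x => ∀ y ∈ D, ∀ p q : ℕ,
    CrossPair D x p q → (CrossPair D y p q ∨ CrossPair D y q p) → (y.1 ≤ x.1 ∧ x.2 ≤ y.2))

/-- `D` is a pipe dream for the permutation `w` (of `ℕ`, 0-indexed): in the reduction
of `D`, the pipe entering at row `p` exits at column `w p`, for every `p`. -/
def HasPerm (D : Finset (ℕ × ℕ)) (w : Equiv.Perm ℕ) : Prop :=
  ∀ p, ExitsAt (reduct D) p (w p)

/-- The excess of a pipe dream: its number of crossings minus that of its reduction. -/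
noncomputable def pdExcess (D : Finset (ℕ × ℕ)) : ℕ := D.card - (reduct D).card

/-- The number of crossings in (0-indexed) row `i` of `D`. -/
def wtRow (D : Finset (ℕ × ℕ)) (i : ℕ) : ℕ := (D.filter (fun x => x.1 = i)).card

/-- A pipe dream is quasi-Yamanouchi if the westmost crossing of every nonempty row
either lies in the westmost column or lies weakly west of some crossing in the row
below it. -/
def QuasiYamPD (D : Finset (ℕ × ℕ)) : Prop :=
  ∀ r c, (r, c) ∈ D → (∀ c' < c, (r, c') ∉ D) →
    (c = 0 ∨ ∃ c'', (r + 1, c'') ∈ D ∧ c ≤ c'')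

/-- One destandardization move, applied to row `r`: if row `r` is nonempty, has no
crossing in the first column, and all its crossings are strictly east of all the
crossings of row `r + 1`, shift every crossing of row `r` one step southwest
(crossings landing on existing crossings merge). -/
def DstStep (D : Finset (ℕ × ℕ)) (r : ℕ) (D' : Finset (ℕ × ℕ)) : Prop :=
  (∃ c, (r, c) ∈ D) ∧ (r, 0) ∉ D ∧
  (∀ c c', (r, c) ∈ D → (r + 1, c') ∈ D → c' < c) ∧
  D' = D.filter (fun x => x.1 ≠ r) ∪
        (D.filter (fun x => x.1 = r)).image (fun x => (r + 1, x.2 - 1))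

/-- `D'` is obtained from `D` by a (possibly empty) sequence of destandardization moves. -/
def DstReaches (D D' : Finset (ℕ × ℕ)) : Prop :=
  Relation.ReflTransGen (fun E E' => ∃ r, DstStep E r E') D D'

/-- No destandardization move applies to `D`. -/
def DstNormal (D : Finset (ℕ × ℕ)) : Prop := ∀ r D', ¬ DstStep D r D'

/-- The `β`-Grothendieck polynomial of `w`, written in the variables `x_1, …, x_n`:
the sum of `β^{ex(P)} x^{wt(P)}` over all pipe dreams `P` for `w`.  (All crossings
of any pipe dream for a permutation `w` with `w i = i` for `i ≥ m` lie in rows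
`< m` and columns `< m`, so for `n, M ≥ m` the finite sum below, over pipe dreams
contained in the box with `n` rows and `M` columns, is the full sum.) -/
noncomputable def grothPoly {R : Type*} [CommRing R] (β : R) (n M : ℕ) (w : Equiv.Perm ℕ) :
    MvPolynomial (Fin n) R :=
  ∑ D ∈ (Finset.range n ×ˢ Finset.range M).powerset.filter (fun D => HasPerm D w),
    monomial (Finsupp.equivFunOnFinite.symm fun i : Fin n => wtRow D i.1) (β ^ pdExcess D)

/-! ## Slide polynomials, refinement, dominance -/

/-- `b` dominates `a`: every initial partial sum of `b` is at least that of `a`. -/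
def Dominates {n : ℕ} (b a : Fin n → ℕ) : Prop :=
  ∀ k : ℕ, ∑ i ∈ Finset.univ.filter (fun i : Fin n => (i : ℕ) < k), a i
    ≤ ∑ i ∈ Finset.univ.filter (fun i : Fin n => (i : ℕ) < k), b i

/-- The (strong) composition `L` refines the composition `M` if `M` is obtained by
summing consecutive entries of `L`. -/
def ListRefines (L M : List ℕ) : Prop :=
  ∃ P : List (List ℕ), ([] ∉ P) ∧ P.flatten = L ∧ P.map List.sum = M

/-- The fundamental slide polynomial `𝔉_a`: the sum of `x^b` over weak compositions
`b` of length `n` which dominate `a` and with `flat b` refining `flat a`. -/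
noncomputable def slidePoly {n : ℕ} (a : Fin n → ℕ) : MvPolynomial (Fin n) ℤ :=
  ∑ p : Fin n → Fin ((∑ i, a i) + 1),
    if Dominates (fun i => (p i : ℕ)) a ∧
        ListRefines (flattenW (fun i => (p i : ℕ))) (flattenW a) then
      monomial (Finsupp.equivFunOnFinite.symm fun i => ((p i : ℕ))) 1
    else 0

/-- The fundamental quasisymmetric polynomial `F_a(x_1, …, x_n)` of a strong
composition `a`: the sum of `x^b` over weak compositions `b` of length `n` with
`flat b` refining `a`. -/
noncomputable def fundQS {R : Type*} [CommRing R] (n : ℕ) (a : List ℕ) :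
    MvPolynomial (Fin n) R :=
  ∑ p : Fin n → Fin (a.sum + 1),
    if ListRefines (flattenW (fun i => ((p i : ℕ)))) a then
      monomial (Finsupp.equivFunOnFinite.symm fun i => ((p i : ℕ))) 1
    else 0

/-- The weak composition of length `n` obtained from a list `L` (of length `≤ n`)
by prepending `n - L.length` zeros. -/
def padLeft (n : ℕ) (L : List ℕ) : Fin n → ℕ := fun i =>
  if n - L.length ≤ (i : ℕ) then L.getD ((i : ℕ) - (n - L.length)) 0 else 0

/-- A polynomial in `x_1, …, x_n` is quasisymmetric if, for every sequence of
positive exponents `e_1, …, e_k` and every pair of strictly increasing sequences of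
variable indices, the coefficients of the corresponding monomials agree. -/
def IsQuasiSym {R : Type*} [CommRing R] {n : ℕ} (f : MvPolynomial (Fin n) R) : Prop :=
  ∀ (k : ℕ) (e : Fin k → ℕ), (∀ t, 0 < e t) →
    ∀ g h : Fin k → Fin n, StrictMono g → StrictMono h →
      MvPolynomial.coeff
          (Finsupp.equivFunOnFinite.symm fun i => ∑ t, if g t = i then e t else 0) f
        = MvPolynomial.coeff
            (Finsupp.equivFunOnFinite.symm fun i => ∑ t, if h t = i then e t else 0) f

/-! ## Set-valued tableaux -/

/-- `f` (giving, for each box `(i, j)` with `i < n`, `j < B`, a set of entries,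
where the element `k : Fin n` stands for the value `k + 1 ∈ {1, …, n}`) is a
set-valued tableau of shape `lam`: boxes of the diagram are nonempty, boxes outside
are empty, rows weakly increase (max of a box ≤ min of the box to its right) and
columns strictly increase. -/
def IsSVT (n B : ℕ) (lam : ℕ → ℕ) (f : Fin n → Fin B → Finset (Fin n)) : Prop :=
  (∀ (i : Fin n) (j : Fin B), (j : ℕ) < lam (i : ℕ) → (f i j).Nonempty) ∧
  (∀ (i : Fin n) (j : Fin B), lam (i : ℕ) ≤ (j : ℕ) → f i j = ∅) ∧
  (∀ (i : Fin n) (j j' : Fin B), (j : ℕ) + 1 = (j' : ℕ) → (j' : ℕ) < lam (i : ℕ) →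
    ∀ x ∈ f i j, ∀ y ∈ f i j', x ≤ y) ∧
  (∀ (i i' : Fin n) (j : Fin B), (i : ℕ) + 1 = (i' : ℕ) → (j : ℕ) < lam (i' : ℕ) →
    ∀ x ∈ f i j, ∀ y ∈ f i' j, (x : ℕ) < (y : ℕ))

/-- A set-valued tableau is quasi-Yamanouchi if for every value `k + 1 > 1` occurring
in it, some instance of `k + 1` lies weakly left of some instance of `k` in a
different box. -/
def SVTQY {n B : ℕ} (f : Fin n → Fin B → Finset (Fin n)) : Prop :=
  ∀ k : Fin n, 0 < (k : ℕ) → (∃ i j, k ∈ f i j) →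
    ∃ (i : Fin n) (j : Fin B) (i' : Fin n) (j' : Fin B) (k' : Fin n),
      (k' : ℕ) + 1 = (k : ℕ) ∧ k ∈ f i j ∧ k' ∈ f i' j' ∧
      (j : ℕ) ≤ (j' : ℕ) ∧ (i, j) ≠ (i', j')

/-- The weight of a set-valued tableau: its `k`-th entry is the number of boxes
containing the value `k + 1`. -/
def svtWt {n B : ℕ} (f : Fin n → Fin B → Finset (Fin n)) : Fin n → ℕ :=
  fun k => ∑ i : Fin n, ∑ j : Fin B, if k ∈ f i j then 1 else 0

/-- The total number of entries of a set-valued tableau. -/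
def svtSize {n B : ℕ} (f : Fin n → Fin B → Finset (Fin n)) : ℕ :=
  ∑ i : Fin n, ∑ j : Fin B, (f i j).card

/-- The Lehmer code of a permutation of `ℕ` (0-indexed). -/
noncomputable def lehmer (w : Equiv.Perm ℕ) (i : ℕ) : ℕ :=
  Set.ncard {j | i < j ∧ w j < w i}

/-- The number of inversions of a permutation of `ℕ`. -/
noncomputable def invNum (w : Equiv.Perm ℕ) : ℕ :=
  Set.ncard {p : ℕ × ℕ | p.1 < p.2 ∧ w p.2 < w p.1}

/-- The Knutson–Miller–Yong map `φ` from set-valued tableaux (entries in `{1,…,n}`,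
shape with at most `n` rows, boxes indexed by `Fin n × Fin B`) to pipe dreams:
a value `k + 1` in the (0-indexed) box `(i, j)` becomes a crossing in row
`n - 1 - k` and column `j + k - i`.  (This is the upside-down placement over the
bottom pipe dream `P_{L(w)}` followed by moving each label `i + r - n - 1` steps
northeast.) -/
def phiKMY (n B : ℕ) (f : Fin n → Fin B → Finset (Fin n)) : Finset (ℕ × ℕ) :=
  ((Finset.univ : Finset (Fin n × Fin B × Fin n)).filter
      (fun t => t.2.2 ∈ f t.1 t.2.1)).image
    (fun t => (n - 1 - (t.2.2 : ℕ), (t.2.1 : ℕ) + (t.2.2 : ℕ) - (t.1 : ℕ)))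

/-! ## Multi-fundamental quasisymmetric functions -/

/-- Between the `i`-th and `(i+1)`-st sets (0-indexed) of a chain for the strong
composition `a`, the strict inequality is imposed exactly when `i + 1` is a partial
sum `a_1 + ⋯ + a_k` of `a`. -/
def ChainStrictAt (a : List ℕ) (i : ℕ) : Prop := ∃ k, 0 < k ∧ (a.take k).sum = i + 1

/-- `σ = (S_1, …, S_{|a|})` is a chain in `Ã_a`: a sequence of `a.sum` nonempty
finite sets of positive integers with `max S_i < min S_{i+1}` when `i` is a partial
sum of `a`, and `max S_i ≤ min S_{i+1}` otherwise. -/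
def IsMultiChain (a : List ℕ) (σ : List (Finset ℕ)) : Prop :=
  σ.length = a.sum ∧ (∀ S ∈ σ, S.Nonempty) ∧ (∀ S ∈ σ, ∀ x ∈ S, 1 ≤ x) ∧
  ∀ i, i + 1 < σ.length →
    ((ChainStrictAt a i → ∀ x ∈ σ.getD i ∅, ∀ y ∈ σ.getD (i + 1) ∅, x < y) ∧
     (¬ ChainStrictAt a i → ∀ x ∈ σ.getD i ∅, ∀ y ∈ σ.getD (i + 1) ∅, x ≤ y))

/-- The number of occurrences of the value `x` among the sets of the chain `σ`. -/
def chainWt (σ : List (Finset ℕ)) (x : ℕ) : ℕ := (σ.filter (fun S => x ∈ S)).length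

/-- The weak composition of length `m + n` obtained by prepending `m` zeros to `a`. -/
def prependZeros {n : ℕ} (m : ℕ) (a : Fin n → ℕ) : Fin (m + n) → ℕ := fun i =>
  if h : (i : ℕ) < m then 0 else a ⟨(i : ℕ) - m, by have := i.isLt; omega⟩

/-! ## Unsplit glides, quasiflatness -/

/-- A weak composition is quasiflat if its nonzero entries occupy consecutive
positions. -/
def Quasiflat {n : ℕ} (a : Fin n → ℕ) : Prop :=
  ∀ i j k : Fin n, i ≤ j → j ≤ k → a i ≠ 0 → a k ≠ 0 → a j ≠ 0

/-- The number of zero entries of `a` that precede some nonzero entry. -/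
def zBefore {n : ℕ} (a : Fin n → ℕ) : ℕ :=
  (Finset.univ.filter (fun i : Fin n => a i = 0 ∧ ∃ j, i < j ∧ a j ≠ 0)).card

/-! ## The genomic shuffle product and the glide product -/

/-- `C` is a shuffle (interleaving) of the words `A` and `B`. -/
inductive IsShuffle {α : Type*} : List α → List α → List α → Prop
  | nil : IsShuffle [] [] []
  | left {A B C : List α} {a : α} : IsShuffle A B C → IsShuffle (a :: A) B (a :: C)
  | right {A B C : List α} {b : α} : IsShuffle A B C → IsShuffle A (b :: B) (b :: C)

/-- `A^gen`: replace the `j`-th occurrence (from the left) of each letter `i` of `A`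
by the superscripted symbol `(i, j)`. -/
def toGen (A : List ℕ) : List (ℕ × ℕ) :=
  (List.range A.length).map (fun i => (A.getD i 0, (A.take i).count (A.getD i 0) + 1))

/-- The lexicographic order on superscripted symbols: `i^j < k^l` iff `i < k`, or
`i = k` and `j < l`. -/
def ltSym (x y : ℕ × ℕ) : Prop := x.1 < y.1 ∨ (x.1 = y.1 ∧ x.2 < y.2)

/-- `C` lies in the genomic shuffle product `A ⧢_gen B`: superscripts of equal
letters weakly increase from left to right, no two consecutive symbols of `C` are
equal, and every subword of `C` containing each symbol of `C` exactly once is a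
shuffle of `A^gen` and `B^gen`. -/
def InGenShuffle (A B : List ℕ) (C : List (ℕ × ℕ)) : Prop :=
  (∀ p q : ℕ, p < q → ∀ (hp : p < C.length) (hq : q < C.length),
    (C.get ⟨p, hp⟩).1 = (C.get ⟨q, hq⟩).1 → (C.get ⟨p, hp⟩).2 ≤ (C.get ⟨q, hq⟩).2) ∧
  List.Chain' (· ≠ ·) C ∧
  (∀ C' : List (ℕ × ℕ), C'.Sublist C → (∀ s ∈ C, C'.count s = 1) →
    IsShuffle (toGen A) (toGen B) C')

/-- `R` is the decomposition of the word `C` into its maximal strictly increasing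
runs. -/
def IsRunDecomp (C : List (ℕ × ℕ)) (R : List (List (ℕ × ℕ))) : Prop :=
  R.flatten = C ∧ (∀ r ∈ R, r ≠ []) ∧ (∀ r ∈ R, r.Chain' ltSym) ∧
  R.Chain' (fun r s => ∀ x y, x ∈ r.getLast? → y ∈ s.head? → ¬ ltSym x y)

/-- `G` is a genotype of the sequence of words `R`: it is obtained by deleting, from
the words of `R`, all but one occurrence of each symbol occurring in `R`, and then
erasing all superscripts. -/
def IsGenotypeSeq (R : List (List (ℕ × ℕ))) (G : List (List ℕ)) : Prop :=
  ∃ R' : List (List (ℕ × ℕ)), R'.length = R.length ∧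
    (∀ i, (R'.getD i []).Sublist (R.getD i [])) ∧
    (∀ s ∈ R.flatten, (R'.flatten).count s = 1) ∧
    G = R'.map (List.map Prod.fst)

/-- `Comp_𝔅(G)` for the letter set `𝔅 = {x | P x}`: the list whose `i`-th entry is
the number of letters of `𝔅` in the `i`-th word of `G`. -/
def compOf (P : ℕ → Bool) (G : List (List ℕ)) : List ℕ :=
  G.map (fun wrd => (wrd.filter (fun x => P x)).length)

/-- The list `L` dominates the weak composition `a`: every initial partial sum of
`L` is at least the corresponding one of `a`. -/
def DomGe {n : ℕ} (L : List ℕ) (a : Fin n → ℕ) : Prop :=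
  ∀ k : ℕ, (∑ i ∈ Finset.univ.filter (fun i : Fin n => (i : ℕ) < k), a i) ≤ (L.take k).sum

/-- The word `A = (2n-1)^{a_1} (2n-3)^{a_2} ⋯ (1)^{a_n}` on the odd letters. -/
def wordA {n : ℕ} (a : Fin n → ℕ) : List ℕ :=
  (((List.finRange n).map (fun i => List.replicate (a i) (2 * (n - (i : ℕ)) - 1)))).flatten

/-- The word `B = (2n)^{b_1} (2n-2)^{b_2} ⋯ (2)^{b_n}` on the even letters. -/
def wordB {n : ℕ} (b : Fin n → ℕ) : List ℕ :=
  (((List.finRange n).map (fun i => List.replicate (b i) (2 * (n - (i : ℕ)))))).flatten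

/-- `C` lies in the genomic shuffle set `GSS(a, b)`: it lies in the genomic shuffle
product of the associated words and every genotype `G` of `Runs(C)` satisfies
`Comp_odd(G) ≥ a` and `Comp_even(G) ≥ b` in dominance order. -/
def InGSS {n : ℕ} (a b : Fin n → ℕ) (C : List (ℕ × ℕ)) : Prop :=
  InGenShuffle (wordA a) (wordB b) C ∧
  ∀ R G, IsRunDecomp C R → IsGenotypeSeq R G →
    DomGe (compOf (fun x => x % 2 == 1) G) a ∧ DomGe (compOf (fun x => x % 2 == 0) G) b

/-- `S` is a valid insertion of empty words into `Runs(C)`, of total length `n`,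
such that every genotype of `S` still satisfies the dominance conditions. -/
def BumpValid {n : ℕ} (a b : Fin n → ℕ) (C : List (ℕ × ℕ))
    (S : List (List (ℕ × ℕ))) : Prop :=
  S.length = n ∧ (∃ R, IsRunDecomp C R ∧ S.filter (fun r => r ≠ []) = R) ∧
  ∀ G, IsGenotypeSeq S G →
    DomGe (compOf (fun x => x % 2 == 1) G) a ∧ DomGe (compOf (fun x => x % 2 == 0) G) b

/-- `S = BumpRuns(C)`: `S` is the dominance-minimal valid insertion of empty words
into `Runs(C)`. -/
def IsBumpRuns {n : ℕ} (a b : Fin n → ℕ) (C : List (ℕ × ℕ))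
    (S : List (List (ℕ × ℕ))) : Prop :=
  BumpValid a b C S ∧ ∀ S', BumpValid a b C S' →
    ∀ k, ((S.take k).map List.length).sum ≤ ((S'.take k).map List.length).sum

/-- The multiplicity `g_{a,b}^c` of the weak composition `c` in the glide product
`a ⧢_gen b`: the number of words `C ∈ GSS(a, b)` with `Comp(BumpRuns(C)) = c`. -/
noncomputable def glideMult {n : ℕ} (a b c : Fin n → ℕ) : ℕ :=
  Set.ncard {C : List (ℕ × ℕ) | InGSS a b C ∧
    ∃ S, IsBumpRuns a b C S ∧ (fun i : Fin n => (S.getD (i : ℕ) []).length) = c}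

/-- The quasisymmetric glide polynomial `G_a^{(β)}(x_1, …, x_n)` of a strong
composition `a` with `ℓ(a) ≤ n`: the glide polynomial of the weak composition
`0^{n - ℓ(a)} a`. -/
noncomputable def qsGlide {R : Type*} [CommRing R] (β : R) (n : ℕ) (a : List ℕ) :
    MvPolynomial (Fin n) R :=
  glidePoly β (padLeft n a)

/-- A glide `(v, r)` of `a` is unsplit if its number of nonzero black entries
equals the number of nonzero entries of `a`, and no zero entry lies to the right of
a nonzero entry. -/
def IsUnsplitGlide {n : ℕ} (a : Fin n → ℕ) (v : Fin n → ℕ) (r : Fin n → Bool) : Prop :=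
  IsGlide a v r ∧
  (Finset.univ.filter (fun i => v i ≠ 0 ∧ r i = false)).card
      = (Finset.univ.filter (fun i => a i ≠ 0)).card ∧
  (∀ i j : Fin n, i < j → v i ≠ 0 → v j ≠ 0)

/-!
Since `a` is not quasiflat, some nonzero entry `a p` is immediately followed by a zero
`a (p + 1)`. Sliding that entry one step to the right gives a weak composition `b` with the same
flattening, so a quasisymmetric polynomial gives `x^a` and `x^b` the same coefficient. In
`𝒢_a^{(β)}` these coefficients are `1` and `0`: condition (ii) forces every glide of `a` to
dominate `a`, which `b` does not; and `a` is a glide of itself only with all entries black,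
because every glide `b` of `a` has `|b| = |a| + ex(b)`.
-/

theorem extVal_coe {n : ℕ} (v : Fin n → ℕ) (i : Fin n) : extVal v i = v i := by
  simp [extVal]

theorem _root_.List.Pairwise.filter_le_getElem_eq_take {α : Type*} [LinearOrder α] {L : List α}
    (hL : L.Pairwise (· < ·)) (j : ℕ) (hj : j < L.length) :
    L.filter (· ≤ L[j]) = L.take (j + 1) := by
  induction L generalizing j with
  | nil => simp at hj
  | cons x L ih =>
    obtain ⟨hx, hL⟩ := List.pairwise_cons.mp hL
    cases j with
    | zero =>
      have : L.filter (· ≤ x) = [] :=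
        List.filter_eq_nil_iff.mpr fun y hy => by simpa using hx y hy
      simp [this]
    | succ j =>
      have hj' : j < L.length := by simpa using hj
      have hxj : x ≤ L[j] := (hx _ (List.getElem_mem hj')).le
      simp [hxj, ih hL j hj']

theorem sum_range_extVal {n : ℕ} (v : Fin n → ℕ) (k : ℕ) :
    ∑ t ∈ range k, extVal v t
      = ∑ x ∈ univ.filter (fun x : Fin n => (x : ℕ) < k), v x := by
  rw [← Finset.sum_filter_add_sum_filter_not (range k) (· < n),
    Finset.sum_eq_zero (s := (range k).filter (¬ · < n)) fun t ht => by
      simp [extVal, (Finset.mem_filter.mp ht).2], add_zero]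
  symm
  refine Finset.sum_bij (fun x _ => x.val) ?_ ?_ ?_ ?_
  · intro x hx; simp_all
  · intro x _ y _ h; exact Fin.ext h
  · intro t ht; simp at ht; exact ⟨⟨t, ht.2⟩, by simp [ht.1], rfl⟩
  · intro x _; simp [extVal]

def nzList {n : ℕ} (a : Fin n → ℕ) : List (Fin n) :=
  (List.finRange n).filter (fun i => a i ≠ 0)

section nzList

variable {n : ℕ} (a : Fin n → ℕ)

theorem mem_nzList {x : Fin n} : x ∈ nzList a ↔ a x ≠ 0 := by simp [nzList]

theorem nzList_pairwise_lt : (nzList a).Pairwise (· < ·) :=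
  (List.pairwise_lt_finRange n).filter _

theorem flattenW_eq_map_nzList : flattenW a = (nzList a).map a := by
  rw [flattenW, List.filter_map]
  rfl

theorem nzPos_eq_map_nzList : nzPos a = (nzList a).map Fin.val := rfl

theorem nzPos_getD (j : ℕ) (hj : j < (nzList a).length) :
    (nzPos a).getD j 0 = ((nzList a)[j] : ℕ) := by
  simp [nzPos_eq_map_nzList, hj]

theorem length_flattenW : (flattenW a).length = (nzList a).length := by
  rw [flattenW_eq_map_nzList, List.length_map]

theorem sum_map_filter_nzList (p : Fin n → Prop) [DecidablePred p] :
    (((nzList a).filter p).map a).sum = ∑ x ∈ univ.filter p, a x := by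
  rw [← List.sum_toFinset _ ((nzList_pairwise_lt a).nodup.filter _),
    ← Finset.sum_filter_ne_zero (univ.filter p)]
  congr 1
  ext x
  simp [mem_nzList, and_comm]

theorem sum_flattenW : (flattenW a).sum = ∑ i, a i := by
  simpa [flattenW_eq_map_nzList] using sum_map_filter_nzList a (fun _ => True)

theorem sum_filter_le_nzList_getElem (j : ℕ) (hj : j < (nzList a).length) :
    ∑ x ∈ univ.filter (· ≤ (nzList a)[j]), a x = ((flattenW a).take (j + 1)).sum := by
  rw [flattenW_eq_map_nzList, ← List.map_take,
    ← (nzList_pairwise_lt a).filter_le_getElem_eq_take j hj, sum_map_filter_nzList]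

end nzList

theorem sum_range_eq_sum_take_add_card (f : ℕ → ℕ) (red : ℕ → Bool) (L : List ℕ)
    (e : ℕ → ℕ) (he0 : e 0 = 0) (hmono : ∀ j < L.length, e j ≤ e (j + 1))
    (hblock : ∀ j < L.length, ∑ t ∈ Ico (e j) (e (j + 1)), f t
      = L.getD j 0 + #((Ico (e j) (e (j + 1))).filter (fun t => red t = true))) :
    ∀ J ≤ L.length, ∑ t ∈ range (e J), f t
      = (L.take J).sum + #((range (e J)).filter (fun t => red t = true)) := by
  intro J hJ
  induction J with
  | zero => simp [he0]
  | succ J ih =>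
    have hJ' : J < L.length := hJ
    simp only [Finset.card_filter] at ih hblock ⊢
    rw [← Finset.sum_range_add_sum_Ico _ (hmono J hJ'),
      ← Finset.sum_range_add_sum_Ico _ (hmono J hJ'),
      ih hJ'.le, hblock J hJ', List.sum_take_succ _ _ hJ', List.getD_eq_getElem _ _ hJ']
    ring

theorem card_filter_range_extRed {n : ℕ} (r : Fin n → Bool) (k : ℕ) :
    #((range k).filter (fun t => extRed r t = true))
      = #(univ.filter (fun x : Fin n => (x : ℕ) < k ∧ r x = true)) := by
  have h := sum_range_extVal (fun x => if r x = true then 1 else 0) k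
  have hc : ∀ t, extVal (fun x => if r x = true then 1 else 0) t
      = if extRed r t = true then 1 else 0 := by
    intro t; unfold extVal extRed; split <;> rfl
  simp only [hc, ← Finset.sum_filter, Finset.filter_filter] at h
  simpa using h

section Glide

variable {n : ℕ} {a v : Fin n → ℕ} {r : Fin n → Bool}

theorem IsGlide.sum_eq (h : IsGlide a v r) : ∑ i, v i = ∑ i, a i + redCount r := by
  obtain ⟨hpos, e, he0, heℓ, hvan, hmono, hblocks⟩ := h
  have key := sum_range_eq_sum_take_add_card (extVal v) (extRed r) (flattenW a) e he0
    (fun j hj => (hmono j hj).le) (fun j hj => (hblocks j hj).1) _ le_rfl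
  have hv : ∑ t ∈ range (e (flattenW a).length), extVal v t = ∑ i, v i := by
    rw [Finset.sum_subset (Finset.range_subset_range.mpr heℓ) fun t _ ht =>
      hvan t (by simpa using ht), sum_range_extVal]
    simp
  have hr : #((range (e (flattenW a).length)).filter (fun t => extRed r t = true))
      = redCount r := by
    rw [card_filter_range_extRed, redCount]
    congr 1
    ext x
    simp only [Finset.mem_filter, Finset.mem_univ, true_and, and_iff_right_iff_imp]
    intro hx
    by_contra hlt
    have := hvan x (not_lt.mp hlt)
    rw [extVal_coe] at this
    exact (hpos x hx).ne' this
  rw [← hv, key, List.take_length, sum_flattenW, hr]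

theorem IsGlide.sum_take_flattenW_le (h : IsGlide a v r) (j : ℕ) (hj : j < (nzList a).length) :
    ((flattenW a).take (j + 1)).sum ≤ ∑ x ∈ univ.filter (· ≤ (nzList a)[j]), v x := by
  obtain ⟨-, e, he0, -, -, hmono, hblocks⟩ := h
  have hjℓ : j < (flattenW a).length := (length_flattenW a).symm ▸ hj
  have hend : e (j + 1) ≤ (nzList a)[j] + 1 := nzPos_getD a j hj ▸ (hblocks j hjℓ).2.1
  have hblock := sum_range_eq_sum_take_add_card (extVal v) (extRed r) (flattenW a) e he0
    (fun j hj => (hmono j hj).le) (fun j hj => (hblocks j hj).1) (j + 1) hjℓ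
  calc ((flattenW a).take (j + 1)).sum
      ≤ ∑ t ∈ range (e (j + 1)), extVal v t := by omega
    _ ≤ ∑ t ∈ range ((nzList a)[j] + 1), extVal v t :=
        Finset.sum_le_sum_of_subset (Finset.range_subset_range.mpr hend)
    _ = ∑ x ∈ univ.filter (· ≤ (nzList a)[j]), v x := by
        rw [sum_range_extVal]
        refine Finset.sum_congr (Finset.filter_congr fun x _ => ?_) fun _ _ => rfl
        rw [Fin.le_iff_val_le_val]
        omega

theorem IsGlide.dominates (h : IsGlide a v r) : Dominates v a := by
  intro k
  set S := univ.filter (fun x : Fin n => a x ≠ 0 ∧ (x : ℕ) < k)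
  rcases S.eq_empty_or_nonempty with hS | hS
  · refine (Finset.sum_eq_zero fun x hx => ?_).trans_le (Nat.zero_le _)
    by_contra hax
    have hxS : x ∈ S :=
      Finset.mem_filter.mpr ⟨Finset.mem_univ _, hax, (Finset.mem_filter.mp hx).2⟩
    simp [hS] at hxS
  -- the last nonzero entry of `a` before position `k`
  have hpS := S.max'_mem hS
  obtain ⟨j, hj, hjp⟩ := List.getElem_of_mem ((mem_nzList a).2 (Finset.mem_filter.mp hpS).2.1)
  have hpk : ((nzList a)[j] : ℕ) < k := hjp ▸ (Finset.mem_filter.mp hpS).2.2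
  calc ∑ x ∈ univ.filter (fun x : Fin n => (x : ℕ) < k), a x
      = ∑ x ∈ univ.filter (· ≤ (nzList a)[j]), a x := by
        refine (Finset.sum_subset (fun x hx => ?_) fun x hx hx' => ?_).symm
        · simp only [Finset.mem_filter, Finset.mem_univ, true_and] at hx ⊢
          exact lt_of_le_of_lt (Fin.le_iff_val_le_val.mp hx) hpk
        · by_contra hax
          have hxS : x ∈ S :=
            Finset.mem_filter.mpr ⟨Finset.mem_univ _, hax, (Finset.mem_filter.mp hx).2⟩
          exact hx' (Finset.mem_filter.mpr ⟨Finset.mem_univ _, hjp ▸ S.le_max' x hxS⟩)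
    _ = ((flattenW a).take (j + 1)).sum := sum_filter_le_nzList_getElem a j hj
    _ ≤ ∑ x ∈ univ.filter (· ≤ (nzList a)[j]), v x := h.sum_take_flattenW_le j hj
    _ ≤ ∑ x ∈ univ.filter (fun x : Fin n => (x : ℕ) < k), v x :=
        Finset.sum_le_sum_of_subset fun x hx => by
          simp only [Finset.mem_filter, Finset.mem_univ, true_and] at hx ⊢
          exact lt_of_le_of_lt (Fin.le_iff_val_le_val.mp hx) hpk

end Glide

section SelfGlide

variable {n : ℕ} (a : Fin n → ℕ)

/-- The blocks of `a` as a glide of itself: the `m`-th block ends right after the `m`-th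
nonzero entry of `a`. -/
def selfBlockEnd (m : ℕ) : ℕ := if m = 0 then 0 else (nzPos a).getD (m - 1) 0 + 1

theorem selfBlockEnd_succ (j : ℕ) (hj : j < (nzList a).length) :
    selfBlockEnd a (j + 1) = ((nzList a)[j] : ℕ) + 1 := by
  rw [selfBlockEnd, if_neg j.succ_ne_zero, Nat.add_sub_cancel, nzPos_getD a j hj]

theorem selfBlockEnd_lt_succ (j : ℕ) (hj : j < (nzList a).length) :
    selfBlockEnd a j < selfBlockEnd a (j + 1) := by
  rw [selfBlockEnd_succ a j hj]
  rcases j with _ | j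
  · simp [selfBlockEnd]
  · rw [selfBlockEnd_succ a j (by omega)]
    exact Nat.succ_lt_succ
      (List.pairwise_iff_getElem.mp (nzList_pairwise_lt a) j (j + 1) (by omega) hj (by omega))

theorem selfBlockEnd_length_le : selfBlockEnd a (nzList a).length ≤ n := by
  rcases Nat.eq_zero_or_pos (nzList a).length with h0 | hpos
  · simp [h0, selfBlockEnd]
  · have := selfBlockEnd_succ a ((nzList a).length - 1) (by omega)
    rw [Nat.sub_add_cancel hpos] at this
    omega

theorem sum_range_selfBlockEnd (m : ℕ) (hm : m ≤ (nzList a).length) :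
    ∑ t ∈ range (selfBlockEnd a m), extVal a t = ((flattenW a).take m).sum := by
  rcases m with _ | j
  · simp [selfBlockEnd]
  · rw [selfBlockEnd_succ a j hm, sum_range_extVal, ← sum_filter_le_nzList_getElem a j hm]
    refine Finset.sum_congr (Finset.filter_congr fun x _ => ?_) fun _ _ => rfl
    rw [Fin.le_iff_val_le_val]
    omega

theorem extVal_eq_zero_of_selfBlockEnd_le (t : ℕ) (ht : selfBlockEnd a (nzList a).length ≤ t) :
    extVal a t = 0 := by
  have h := Finset.sum_filter_add_sum_filter_not univ
    (fun x : Fin n => (x : ℕ) < selfBlockEnd a (nzList a).length) a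
  rw [← sum_range_extVal, sum_range_selfBlockEnd a _ le_rfl,
    List.take_of_length_le (length_flattenW a).le, sum_flattenW, add_eq_left,
    Finset.sum_eq_zero_iff] at h
  unfold extVal
  split_ifs with htn
  · exact h ⟨t, htn⟩ (by simp; omega)
  · rfl

theorem isGlide_self : IsGlide a a fun _ => false := by
  have hℓ : (flattenW a).length = (nzList a).length := length_flattenW a
  refine ⟨by simp, selfBlockEnd a, rfl, hℓ ▸ selfBlockEnd_length_le a,
    hℓ ▸ extVal_eq_zero_of_selfBlockEnd_le a,
    fun j hj => selfBlockEnd_lt_succ a j (hℓ ▸ hj),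
    fun j hj => ?_⟩
  rw [hℓ] at hj
  refine ⟨?_, by rw [selfBlockEnd_succ a j hj, nzPos_getD a j hj], by simp [extRed]⟩
  have h := Finset.sum_range_add_sum_Ico (extVal a) (selfBlockEnd_lt_succ a j hj).le
  rw [sum_range_selfBlockEnd a j hj.le, sum_range_selfBlockEnd a (j + 1) hj,
    List.sum_take_succ _ _ (hℓ ▸ hj)] at h
  rw [List.getD_eq_getElem _ _ (hℓ ▸ hj)]
  simp [extRed]
  omega

end SelfGlide

theorem isGlide_self_iff {n : ℕ} {a : Fin n → ℕ} {r : Fin n → Bool} :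
    IsGlide a a r ↔ r = fun _ => false := by
  refine ⟨fun h => ?_, fun h => h ▸ isGlide_self a⟩
  have h0 : redCount r = 0 := by have := h.sum_eq; omega
  rw [redCount, Finset.card_eq_zero, Finset.filter_eq_empty_iff] at h0
  funext x
  simpa using h0 (Finset.mem_univ x)

section Coeff

variable {R : Type*} [CommRing R] (β : R) {n : ℕ}

theorem coeff_glidePoly (a α : Fin n → ℕ) :
    coeff (Finsupp.equivFunOnFinite.symm α) (glidePoly β a)
      = ∑ p : (Fin n → Fin ((∑ i, a i) + n + 1)) × (Fin n → Bool),
          if IsGlide a (fun i => (p.1 i : ℕ)) p.2 ∧ (fun i => (p.1 i : ℕ)) = α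
          then β ^ redCount p.2 else 0 := by
  rw [glidePoly, coeff_sum]
  refine Finset.sum_congr rfl fun p _ => ?_
  by_cases hv : (fun i => (p.1 i : ℕ)) = α
  · subst hv
    split_ifs <;> simp_all [coeff_monomial]
  · split_ifs <;> simp_all [coeff_monomial, (Equiv.injective _).eq_iff]

theorem coeff_glidePoly_eq_zero {a α : Fin n → ℕ} (h : ∀ r, ¬ IsGlide a α r) :
    coeff (Finsupp.equivFunOnFinite.symm α) (glidePoly β a) = 0 := by
  rw [coeff_glidePoly]
  exact Finset.sum_eq_zero fun p _ => if_neg fun ⟨hg, hp⟩ => h p.2 (hp ▸ hg)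

theorem coeff_glidePoly_self (a : Fin n → ℕ) :
    coeff (Finsupp.equivFunOnFinite.symm a) (glidePoly β a) = 1 := by
  have hbound : ∀ x, a x < ∑ i, a i + n + 1 := fun x =>
    Nat.lt_succ_of_le ((Finset.single_le_sum (fun i _ => Nat.zero_le (a i))
      (Finset.mem_univ x)).trans (Nat.le_add_right _ _))
  rw [coeff_glidePoly, Finset.sum_eq_single (fun x => ⟨a x, hbound x⟩, fun _ => false)]
  · simp [isGlide_self a, redCount]
  · rintro p - hp
    refine if_neg fun ⟨hg, hv⟩ => hp ?_
    rw [hv, isGlide_self_iff] at hg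
    exact Prod.ext (funext fun x => Fin.ext (congrFun hv x)) hg
  · simp

end Coeff

theorem sum_ite_apply_eq_of_injective {n k : ℕ} {α : Fin n → ℕ} {g : Fin k → Fin n}
    (hg : Function.Injective g) (hsupp : ∀ x, α x ≠ 0 → x ∈ Set.range g) (i : Fin n) :
    ∑ t, (if g t = i then α (g t) else 0) = α i := by
  by_cases hi : α i = 0
  · rw [hi]
    exact Finset.sum_eq_zero fun t _ => by split_ifs with h <;> simp [h, hi]
  obtain ⟨t, rfl⟩ := hsupp i hi
  rw [Finset.sum_eq_single t (fun t' _ ht' => if_neg (hg.ne ht')) (by simp), if_pos rfl]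

theorem IsQuasiSym.coeff_comp_swap {R : Type*} [CommRing R] {n : ℕ}
    {f : MvPolynomial (Fin n) R} (hf : IsQuasiSym f) {α : Fin n → ℕ} {p q : Fin n}
    (hpq : (q : ℕ) = p + 1) (hq : α q = 0) :
    coeff (Finsupp.equivFunOnFinite.symm (α ∘ Equiv.swap p q)) f
      = coeff (Finsupp.equivFunOnFinite.symm α) f := by
  set s := univ.filter (α · ≠ 0)
  set g := s.orderEmbOfFin rfl
  have hgα : ∀ t, α (g t) ≠ 0 := fun t => (Finset.mem_filter.mp (s.orderEmbOfFin_mem rfl t)).2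
  have hsupp : ∀ x, α x ≠ 0 → x ∈ Set.range g := fun x hx => by
    rw [Finset.range_orderEmbOfFin]
    simpa [s] using hx
  have hswap : StrictMono (Equiv.swap p q ∘ g) := by
    intro t₁ t₂ ht
    have hlt := g.strictMono ht
    have h₁ : g t₁ ≠ q := fun h => hgα t₁ (h ▸ hq)
    have h₂ : g t₂ ≠ q := fun h => hgα t₂ (h ▸ hq)
    simp only [Function.comp_apply]
    by_cases hp₁ : g t₁ = p <;> by_cases hp₂ : g t₂ = p
    · exact absurd (hp₁.trans hp₂.symm) hlt.ne
    · rw [hp₁, Equiv.swap_apply_left, Equiv.swap_apply_of_ne_of_ne hp₂ h₂]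
      rw [hp₁] at hlt
      rw [Fin.lt_def] at hlt ⊢
      have := Fin.val_ne_of_ne h₂
      omega
    · rw [hp₂, Equiv.swap_apply_left, Equiv.swap_apply_of_ne_of_ne hp₁ h₁]
      rw [hp₂] at hlt
      rw [Fin.lt_def] at hlt ⊢
      omega
    · rwa [Equiv.swap_apply_of_ne_of_ne hp₁ h₁, Equiv.swap_apply_of_ne_of_ne hp₂ h₂]
  have key := hf s.card (fun t => α (g t)) (fun t => Nat.pos_of_ne_zero (hgα t))
    (Equiv.swap p q ∘ g) g hswap g.strictMono
  have hg : (fun i => ∑ t, if g t = i then α (g t) else 0) = α :=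
    funext (sum_ite_apply_eq_of_injective g.injective hsupp)
  have hg' : (fun i => ∑ t, if (Equiv.swap p q ∘ g) t = i then α (g t) else 0)
      = α ∘ Equiv.swap p q := by
    funext i
    simp only [Function.comp_apply, Equiv.swap_apply_eq_iff]
    exact sum_ite_apply_eq_of_injective g.injective hsupp _
  rwa [hg, hg'] at key

theorem _root_.Fin.exists_succ_not_of_le {n : ℕ} (P : Fin n → Prop) {i j : Fin n}
    (hij : i ≤ j) (hi : P i) (hj : ¬ P j) : ∃ p q : Fin n, (q : ℕ) = p + 1 ∧ P p ∧ ¬ P q := by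
  by_contra! h
  have hP : ∀ d (x : Fin n), (x : ℕ) = i + d → P x := by
    intro d
    induction d with
    | zero => exact fun x hx => Fin.ext hx ▸ hi
    | succ d ih => exact fun x hx => h ⟨i + d, by omega⟩ x hx (ih _ rfl)
  exact hj (hP (j - i) j (by rw [Fin.le_iff_val_le_val] at hij; omega))

theorem not_dominates_comp_swap {n : ℕ} {a : Fin n → ℕ} {p q : Fin n}
    (hpq : (q : ℕ) = p + 1) (hp : a p ≠ 0) (hq : a q = 0) :
    ¬ Dominates (a ∘ Equiv.swap p q) a := by
  intro h
  have hk := h (p + 1)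
  set S := univ.filter (fun x : Fin n => (x : ℕ) < p + 1)
  have hpS : p ∈ S := by simp [S]
  have hrest : ∑ x ∈ S.erase p, (a ∘ Equiv.swap p q) x = ∑ x ∈ S.erase p, a x :=
    Finset.sum_congr rfl fun x hx => by
      obtain ⟨hxp, hxS⟩ := Finset.mem_erase.mp hx
      have hxq : x ≠ q := by
        rintro rfl
        simp only [S, Finset.mem_filter] at hxS
        omega
      simp [Equiv.swap_apply_of_ne_of_ne hxp hxq]
  rw [← Finset.add_sum_erase S _ hpS, ← Finset.add_sum_erase S _ hpS, hrest] at hk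
  simp only [Function.comp_apply, Equiv.swap_apply_left, hq] at hk
  omega

/-- If a weak composition `a` of length `n` is not quasiflat
(its nonzero entries do not occupy a set of consecutive positions), then for every
value of `β` the glide polynomial `𝒢_a^{(β)}` is not quasisymmetric in
`x_1, …, x_n`. -/
theorem not_quasiflat_not_quasisymmetric (n : ℕ) (a : Fin n → ℕ)
    (ha : ¬ Quasiflat a) :
    ∀ c : ℤ, ¬ IsQuasiSym (glidePoly c a) := by
  intro c hsym
  simp only [Quasiflat, not_forall] at ha
  obtain ⟨i, j, -, hij, -, hi, -, hj⟩ := ha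
  obtain ⟨p, q, hpq, hp, hq⟩ := Fin.exists_succ_not_of_le (a · ≠ 0) hij hi hj
  rw [not_ne_iff] at hq
  have h := hsym.coeff_comp_swap hpq hq
  rw [coeff_glidePoly_self, coeff_glidePoly_eq_zero c fun r hr =>
    not_dominates_comp_swap hpq hp hq hr.dominates] at h
  exact zero_ne_one h

end GlidePaper
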